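/- Let t¹, t² be orthonormal vectors in Euclidean three-space ℝ³, n = t¹ × t², m a unit vector, P_m v = v − ⟨v, m⟩ m, and let M be the 2×2 real matrix with entries M_{ik} = ⟨tⁱ, P_m tᵏ⟩ for i, k ∈ {1, 2}. Then |det M − 1| = 1 − ⟨n, m⟩² ≤ ‖n − m‖². -/

import Mathlib

open scoped RealInnerProductSpace

/-- The cross product of two vectors in Euclidean three-space `ℝ³`. -/
noncomputable def cross3 (a b : EuclideanSpace ℝ (Fin 3)) : EuclideanSpace ℝ (Fin 3) :=
  (WithLp.equiv 2 (Fin 3 → ℝ)).symm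
    ![a 1 * b 2 - a 2 * b 1, a 2 * b 0 - a 0 * b 2, a 0 * b 1 - a 1 * b 0]

/-- The orthogonal projection onto the plane orthogonal to `m`:
`P_m v = v - ⟪v, m⟫ • m`. -/
noncomputable def projPlane (m v : EuclideanSpace ℝ (Fin 3)) : EuclideanSpace ℝ (Fin 3) :=
  v - ⟪v, m⟫ • m

/-!
`t¹, t², n` is an orthonormal basis of `ℝ³`, so `⟪t¹, m⟫² + ⟪t², m⟫² + ⟪n, m⟫² = ‖m‖² = 1`;
here this comes from the Gram-determinant identity for `⟪a × b, c⟫²`. The matrix `M` is the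
identity minus the rank-one matrix `(⟪tⁱ, m⟫⟪tᵏ, m⟫)`, so `det M = 1 - ⟪t¹, m⟫² - ⟪t², m⟫²`
and `|det M - 1| = 1 - ⟪n, m⟫²`. Finally `‖n - m‖² = 2 - 2⟪n, m⟫`, and
`2 - 2x - (1 - x²) = (1 - x)² ≥ 0`.
-/

lemma EuclideanSpace.inner_fin_three (x y : EuclideanSpace ℝ (Fin 3)) :
    ⟪x, y⟫ = x 0 * y 0 + x 1 * y 1 + x 2 * y 2 := by
  simp only [PiLp.inner_apply, Fin.sum_univ_three, RCLike.inner_apply, conj_trivial]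
  ring

lemma cross3_apply_zero (a b : EuclideanSpace ℝ (Fin 3)) :
    cross3 a b 0 = a 1 * b 2 - a 2 * b 1 := rfl

lemma cross3_apply_one (a b : EuclideanSpace ℝ (Fin 3)) :
    cross3 a b 1 = a 2 * b 0 - a 0 * b 2 := rfl

lemma cross3_apply_two (a b : EuclideanSpace ℝ (Fin 3)) :
    cross3 a b 2 = a 0 * b 1 - a 1 * b 0 := rfl

lemma inner_cross3_self (a b : EuclideanSpace ℝ (Fin 3)) :
    ⟪cross3 a b, cross3 a b⟫ = ⟪a, a⟫ * ⟪b, b⟫ - ⟪a, b⟫ ^ 2 := by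
  simp only [EuclideanSpace.inner_fin_three, cross3_apply_zero, cross3_apply_one,
    cross3_apply_two]
  ring

lemma inner_cross3_sq (a b c : EuclideanSpace ℝ (Fin 3)) :
    ⟪cross3 a b, c⟫ ^ 2 = ⟪a, a⟫ * ⟪b, b⟫ * ⟪c, c⟫ + 2 * ⟪a, b⟫ * ⟪b, c⟫ * ⟪c, a⟫
      - ⟪a, a⟫ * ⟪b, c⟫ ^ 2 - ⟪b, b⟫ * ⟪c, a⟫ ^ 2 - ⟪c, c⟫ * ⟪a, b⟫ ^ 2 := by
  simp only [EuclideanSpace.inner_fin_three, cross3_apply_zero, cross3_apply_one,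
    cross3_apply_two]
  ring

lemma norm_cross3_of_orthonormal {t1 t2 : EuclideanSpace ℝ (Fin 3)}
    (ht1 : ‖t1‖ = 1) (ht2 : ‖t2‖ = 1) (ht12 : ⟪t1, t2⟫ = 0) : ‖cross3 t1 t2‖ = 1 := by
  rw [norm_eq_sqrt_real_inner, inner_cross3_self, real_inner_self_eq_norm_sq,
    real_inner_self_eq_norm_sq, ht1, ht2, ht12]
  norm_num

lemma inner_sq_add_inner_sq_add_inner_cross3_sq {t1 t2 : EuclideanSpace ℝ (Fin 3)}
    (ht1 : ‖t1‖ = 1) (ht2 : ‖t2‖ = 1) (ht12 : ⟪t1, t2⟫ = 0) (m : EuclideanSpace ℝ (Fin 3)) :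
    ⟪t1, m⟫ ^ 2 + ⟪t2, m⟫ ^ 2 + ⟪cross3 t1 t2, m⟫ ^ 2 = ‖m‖ ^ 2 := by
  rw [inner_cross3_sq, real_inner_self_eq_norm_sq, real_inner_self_eq_norm_sq,
    real_inner_self_eq_norm_sq, ht1, ht2, ht12, real_inner_comm m t1]
  ring

lemma det_flattening_matrix {t1 t2 : EuclideanSpace ℝ (Fin 3)}
    (ht1 : ‖t1‖ = 1) (ht2 : ‖t2‖ = 1) (ht12 : ⟪t1, t2⟫ = 0) (m : EuclideanSpace ℝ (Fin 3)) :
    (!![⟪t1, projPlane m t1⟫, ⟪t1, projPlane m t2⟫;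
         ⟪t2, projPlane m t1⟫, ⟪t2, projPlane m t2⟫] : Matrix (Fin 2) (Fin 2) ℝ).det
      = 1 - ⟪t1, m⟫ ^ 2 - ⟪t2, m⟫ ^ 2 := by
  have ht21 : ⟪t2, t1⟫ = 0 := by rw [real_inner_comm, ht12]
  simp only [projPlane, Matrix.det_fin_two_of, inner_sub_right, real_inner_smul_right,
    real_inner_self_eq_norm_sq, ht1, ht2, ht12, ht21]
  ring

lemma one_sub_inner_sq_le_norm_sub_sq {E : Type*} [NormedAddCommGroup E] [InnerProductSpace ℝ E]
    {u v : E} (hu : ‖u‖ = 1) (hv : ‖v‖ = 1) : 1 - ⟪u, v⟫ ^ 2 ≤ ‖u - v‖ ^ 2 := by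
  rw [norm_sub_sq_real, hu, hv]
  nlinarith [sq_nonneg (1 - ⟪u, v⟫)]

/-- For orthonormal `t¹, t²` in `ℝ³` with induced unit normal `n = t¹ × t²`,
a unit vector `m`, `P_m v = v - ⟪v, m⟫ • m`, and the 2×2 matrix `M` with entries
`M_{ik} = ⟪tⁱ, P_m tᵏ⟫`, we have `|det M − 1| = 1 − ⟪n, m⟫² ≤ ‖n − m‖²`. -/
theorem det_flattening_jacobian_close_to_one
    (t1 t2 m : EuclideanSpace ℝ (Fin 3))
    (ht1 : ‖t1‖ = 1) (ht2 : ‖t2‖ = 1) (ht12 : ⟪t1, t2⟫ = 0) (hm : ‖m‖ = 1) :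
    |(!![⟪t1, projPlane m t1⟫, ⟪t1, projPlane m t2⟫;
         ⟪t2, projPlane m t1⟫, ⟪t2, projPlane m t2⟫] : Matrix (Fin 2) (Fin 2) ℝ).det - 1|
        = 1 - ⟪cross3 t1 t2, m⟫ ^ 2 ∧
    1 - ⟪cross3 t1 t2, m⟫ ^ 2 ≤ ‖cross3 t1 t2 - m‖ ^ 2 := by
  have hsum := inner_sq_add_inner_sq_add_inner_cross3_sq ht1 ht2 ht12 m
  rw [hm, one_pow] at hsum
  refine ⟨?_, one_sub_inner_sq_le_norm_sub_sq (norm_cross3_of_orthonormal ht1 ht2 ht12) hm⟩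
  rw [det_flattening_matrix ht1 ht2 ht12, abs_of_nonpos
    (by linarith [sq_nonneg ⟪t1, m⟫, sq_nonneg ⟪t2, m⟫])]
  linarith
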